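/- Let u be a harmonic function on the unit disk that extends continuously to the closed disk, and let v be a conjugate harmonic of u. Then it is not true in general that v extends continuously to the closed disk; i.e., there exists a harmonic u continuous on the closed unit disk whose conjugate harmonic function v fails to be bounded in every neighborhood of every point of the unit circle. -/

import Mathlib

open Complex MeasureTheory Filter Metric Set

noncomputable section

/-- `u` is harmonic on `D`: twice continuously differentiable with vanishing Laplacian. -/
def IsHarmonicOn (u : ℂ → ℝ) (D : Set ℂ) : Prop :=
  ContDiffOn ℝ 2 u D ∧
  ∀ z ∈ D, fderiv ℝ (fun w => fderiv ℝ u w 1) z 1 +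
    fderiv ℝ (fun w => fderiv ℝ u w Complex.I) z Complex.I = 0

/-- The open unit disk in `ℂ`. -/
def unitDisk : Set ℂ := Metric.ball 0 1

/-- A Stolz angle (nontangential approach region) at `ζ` with aperture `M`. -/
def stolzAngle (ζ : ℂ) (M : ℝ) : Set ℂ :=
  {z | ‖z‖ < 1 ∧ ‖z - ζ‖ < M * (1 - ‖z‖)}

/-- `f` has angular (nontangential) limit `L` at the boundary point `ζ` of the unit disk:
limit along every Stolz angle at `ζ`. -/
def HasAngularLimit {α : Type*} [TopologicalSpace α] (f : ℂ → α) (ζ : ℂ) (L : α) : Prop :=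
  ∀ M : ℝ, 1 < M → Filter.Tendsto f (nhdsWithin ζ (stolzAngle ζ M)) (nhds L)

/-- `v` is a conjugate harmonic function of `u` on `D`: `u + i v` is holomorphic on `D`. -/
def IsConjugatePair (u v : ℂ → ℝ) (D : Set ℂ) : Prop :=
  DifferentiableOn ℂ (fun z => (u z : ℂ) + v z * Complex.I) D

/-- The truncated Stolz sector with vertex at the boundary point `ζ` of the unit disk used in
the Privalov construction: `{z ∈ 𝔻 : |z| > 1/√2, |arg(ζ - z)| < π/4}` (the argument being
normalized relative to the direction `ζ`). -/
def privalovSector (ζ : ℂ) : Set ℂ :=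
  {z | ‖z‖ < 1 ∧ 1 / Real.sqrt 2 < ‖z‖ ∧
       |Complex.arg ((ζ - z) / ζ)| < Real.pi / 4}

/-- The Privalov domain over a set `E` of boundary points:
`𝔇 = (⋃ ζ ∈ E, S_ζ) ∪ {|z| ≤ 1/√2}`. -/
def privalovDomain (E : Set ℂ) : Set ℂ :=
  (⋃ ζ ∈ E, privalovSector ζ) ∪ Metric.closedBall 0 (1 / Real.sqrt 2)

/-! The kernel `H(w) = i log(1 - log(1 - w))` is holomorphic on the disk. Its real part
`-arg(1 - log(1 - w))` is continuous on the closed disk, also at `w = 1`, because there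
`1 - log(1 - w)` runs off to `+∞` in the right half-plane with bounded imaginary part; its
imaginary part `log |1 - log(1 - w)|` is bounded below and tends to `+∞` at `1`.
Superpose rotated copies over a dense sequence `ωₖ` of the circle: `f(z) = ∑ 2⁻ᵏ H(z / ωₖ)`.
The real parts converge uniformly on the closed disk, while `Im f` dominates `2⁻ʲ Im H(z / ωⱼ)`
up to a constant, so it is unbounded near every `ωⱼ`, hence near every boundary point. -/

open scoped Topology ComplexOrder

lemma HasDerivAt.fderiv_re_apply {F : ℂ → ℂ} {F' z : ℂ} (hF : HasDerivAt F F' z) (v : ℂ) :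
    fderiv ℝ (fun w => (F w).re) z v = (F' * v).re := by
  have h : HasFDerivAt (fun w => (F w).re) _ z :=
    reCLM.hasFDerivAt.comp z (hF.hasFDerivAt.restrictScalars ℝ)
  rw [h.fderiv]
  simp [mul_comm]

lemma isHarmonicOn_re_of_differentiableOn {F : ℂ → ℂ} {D : Set ℂ} (hD : IsOpen D)
    (hF : DifferentiableOn ℂ F D) : IsHarmonicOn (fun z => (F z).re) D := by
  have hAn : AnalyticOnNhd ℂ F D := hF.analyticOnNhd hD
  refine ⟨reCLM.contDiff.comp_contDiffOn ((hAn.contDiffOn hD.uniqueDiffOn).restrict_scalars ℝ),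
    fun z hz => ?_⟩
  have second_derivative : ∀ v : ℂ, fderiv ℝ (fun w => fderiv ℝ (fun z => (F z).re) w v) z v =
      (deriv (deriv F) z * v * v).re := by
    intro v
    have first_derivative : (fun w => fderiv ℝ (fun z => (F z).re) w v) =ᶠ[𝓝 z]
        fun w => (deriv F w * v).re :=
      eventually_of_mem (hD.mem_nhds hz) fun w hw =>
        (hAn w hw).differentiableAt.hasDerivAt.fderiv_re_apply v
    rw [first_derivative.fderiv_eq,
      ((hAn.deriv z hz).differentiableAt.hasDerivAt.mul_const v).fderiv_re_apply v]
  rw [second_derivative, second_derivative]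
  simp

section RotationSeries

variable {E : Type*} [NormedAddCommGroup E] [NormedSpace ℝ E]
  {a : ℕ → ℝ} {ω : ℕ → sphere (0 : ℂ) 1}

def rotationSeries (H : ℂ → E) (a : ℕ → ℝ) (ω : ℕ → sphere (0 : ℂ) 1) (z : ℂ) : E :=
  ∑' k, a k • H (z / ω k)

lemma norm_div_coe_sphere (z : ℂ) (ζ : sphere (0 : ℂ) 1) : ‖z / ζ‖ = ‖z‖ := by
  rw [norm_div, norm_eq_of_mem_sphere ζ, div_one]

lemma exists_summable_bound_rotationSeries {H : ℂ → E} {r : ℝ}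
    (hH : ContinuousOn H (closedBall 0 r)) (ha : Summable a) :
    ∃ u : ℕ → ℝ, Summable u ∧ ∀ k, ∀ z ∈ closedBall (0 : ℂ) r, ‖a k • H (z / ω k)‖ ≤ u k := by
  obtain ⟨B, hB⟩ := (isCompact_closedBall (0 : ℂ) r).exists_bound_of_continuousOn hH
  refine ⟨fun k => |a k| * B, ha.abs.mul_right B, fun k z hz => ?_⟩
  rw [norm_smul, Real.norm_eq_abs]
  refine mul_le_mul_of_nonneg_left (hB _ ?_) (abs_nonneg _)
  rwa [mem_closedBall_zero_iff, norm_div_coe_sphere, ← mem_closedBall_zero_iff]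

lemma summable_rotationSeries [CompleteSpace E] {H : ℂ → E} (hH : ContinuousOn H (ball 0 1))
    (ha : Summable a) {z : ℂ} (hz : z ∈ ball (0 : ℂ) 1) : Summable fun k => a k • H (z / ω k) := by
  obtain ⟨u, hu, hbound⟩ := exists_summable_bound_rotationSeries (ω := ω)
    (hH.mono (closedBall_subset_ball (mem_ball_zero_iff.1 hz))) ha
  exact hu.of_norm_bounded fun k => hbound k z (mem_closedBall_zero_iff.2 le_rfl)

lemma continuousOn_rotationSeries [CompleteSpace E] {H : ℂ → E}
    (hH : ContinuousOn H (closedBall 0 1)) (ha : Summable a) : ContinuousOn (rotationSeries H a ω) (closedBall 0 1) := by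
  obtain ⟨u, hu, hbound⟩ := exists_summable_bound_rotationSeries (ω := ω) hH ha
  refine continuousOn_tsum (fun k => ?_) hu hbound
  refine (hH.comp (continuous_id.div_const _).continuousOn fun z hz => ?_).const_smul (a k)
  rwa [mem_closedBall_zero_iff, Function.id_def, norm_div_coe_sphere, ← mem_closedBall_zero_iff]

lemma differentiableOn_rotationSeries {H : ℂ → ℂ} (hH : DifferentiableOn ℂ H (ball 0 1))
    (ha : Summable a) : DifferentiableOn ℂ (rotationSeries H a ω) (ball 0 1) := by
  intro z hz
  obtain ⟨r, hzr, hr⟩ := exists_between (mem_ball_zero_iff.1 hz)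
  obtain ⟨u, hu, hbound⟩ := exists_summable_bound_rotationSeries (ω := ω)
    (hH.continuousOn.mono (closedBall_subset_ball hr)) ha
  have hdiff : DifferentiableOn ℂ (rotationSeries H a ω) (ball 0 r) := by
    refine differentiableOn_tsum_of_summable_norm hu (fun k => ?_) isOpen_ball
      fun k z hz => hbound k z (ball_subset_closedBall hz)
    refine ((hH.comp (differentiable_id.div_const _).differentiableOn fun w hw => ?_).const_smul
      (a k))
    rw [mem_ball_zero_iff, norm_div_coe_sphere]
    exact (mem_ball_zero_iff.1 hw).trans hr
  exact (hdiff.differentiableAt (isOpen_ball.mem_nhds (mem_ball_zero_iff.2 hzr)))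
    |>.differentiableWithinAt

lemma re_rotationSeries {H : ℂ → ℂ} {z : ℂ} (hs : Summable fun k => a k • H (z / ω k)) :
    (rotationSeries H a ω z).re = rotationSeries (fun ξ => (H ξ).re) a ω z := by
  rw [rotationSeries, rotationSeries, re_tsum hs]
  simp

lemma im_rotationSeries {H : ℂ → ℂ} {z : ℂ} (hs : Summable fun k => a k • H (z / ω k)) :
    (rotationSeries H a ω z).im = rotationSeries (fun ξ => (H ξ).im) a ω z := by
  rw [rotationSeries, rotationSeries, im_tsum hs]
  simp

lemma im_rotationSeries_ge {H : ℂ → ℂ} {m : ℝ} (ha : ∀ k, 0 ≤ a k) (hsa : Summable a) {z : ℂ}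
    (hs : Summable fun k => a k • H (z / ω k)) (hm : ∀ k, m ≤ (H (z / ω k)).im) (j : ℕ) :
    a j * ((H (z / ω j)).im - m) + m * ∑' k, a k ≤ (rotationSeries H a ω z).im := by
  have hs_im : Summable fun k => a k • (H (z / ω k)).im := by
    simpa using imCLM.summable hs
  have hsum : ∑' k, a k * ((H (z / ω k)).im - m) = (rotationSeries H a ω z).im - m * ∑' k, a k := by
    rw [im_rotationSeries hs, rotationSeries, ← tsum_mul_left, ← hs_im.tsum_sub (hsa.mul_left m)]
    exact tsum_congr fun k => by rw [smul_eq_mul]; ring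
  have hs_shifted : Summable fun k => a k * ((H (z / ω k)).im - m) := by
    simpa only [smul_eq_mul, mul_sub, mul_comm m] using hs_im.sub (hsa.mul_left m)
  have hj := hs_shifted.le_tsum j fun k _ => mul_nonneg (ha k) (sub_nonneg.2 (hm k))
  linarith

lemma exists_lt_im_rotationSeries {H : ℂ → ℂ} {m : ℝ} (hH : ContinuousOn H (ball 0 1))
    (hm : ∀ ξ ∈ ball (0 : ℂ) 1, m ≤ (H ξ).im)
    (hlim : Tendsto (fun ξ => (H ξ).im) (𝓝[ball 0 1] 1) atTop) (ha : ∀ k, 0 < a k)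
    (hsa : Summable a) (hω : DenseRange ω) {ζ : ℂ} (hζ : ζ ∈ sphere (0 : ℂ) 1) {ε : ℝ}
    (hε : 0 < ε) (C : ℝ) : ∃ z ∈ ball ζ ε ∩ ball 0 1, C < (rotationSeries H a ω z).im := by
  obtain ⟨j, hj⟩ := hω.exists_dist_lt ⟨ζ, hζ⟩ (half_pos hε)
  have : (𝓝[ball (0 : ℂ) 1] 1).NeBot :=
    mem_closure_iff_nhdsWithin_neBot.1 (by simp [closure_ball])
  have hbig : Tendsto (fun ξ => a j * ((H ξ).im - m) + m * ∑' k, a k) (𝓝[ball 0 1] 1) atTop :=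
    tendsto_atTop_add_const_right _ _
      ((tendsto_atTop_add_const_right _ (-m) hlim).const_mul_atTop (ha j))
  obtain ⟨t, htC, ht, ht1⟩ := ((hbig.eventually_gt_atTop C).and
    (inter_mem_nhdsWithin _ (ball_mem_nhds 1 (half_pos hε)))).exists
  have hω_norm : ‖(ω j : ℂ)‖ = 1 := norm_eq_of_mem_sphere (ω j)
  refine ⟨ω j * t, ⟨?_, ?_⟩, ?_⟩
  · calc dist (ω j * t) ζ ≤ dist (ω j * t) (ω j) + dist (ω j : ℂ) ζ := dist_triangle _ _ _
      _ = dist t 1 + dist (ω j : ℂ) ζ := by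
        rw [dist_eq_norm, ← mul_sub_one, norm_mul, hω_norm, one_mul, ← dist_eq_norm]
      _ < ε / 2 + ε / 2 := add_lt_add ht1 (by rw [dist_comm]; exact hj)
      _ = ε := add_halves ε
  · rwa [mem_ball_zero_iff, norm_mul, hω_norm, one_mul, ← mem_ball_zero_iff]
  · have hz : ω j * t ∈ ball (0 : ℂ) 1 := by
      rwa [mem_ball_zero_iff, norm_mul, hω_norm, one_mul, ← mem_ball_zero_iff]
    have hdiv : ∀ k, (ω j * t) / ω k ∈ ball (0 : ℂ) 1 := fun k => by
      rwa [mem_ball_zero_iff, norm_div_coe_sphere, ← mem_ball_zero_iff]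
    have hbound := im_rotationSeries_ge (fun k => (ha k).le) hsa
      (summable_rotationSeries hH hsa hz) (fun k => hm _ (hdiv k)) j
    rw [mul_div_cancel_left₀ _ (ne_zero_of_mem_unit_sphere (ω j))] at hbound
    exact htC.trans_le hbound

end RotationSeries

lemma Complex.tendsto_arg_of_tendsto_re_atTop {α : Type*} {l : Filter α} {f : α → ℂ}
    (hre : Tendsto (fun x => (f x).re) l atTop)
    (him : IsBoundedUnder (· ≤ ·) l fun x => ‖(f x).im‖) :
    Tendsto (fun x => arg (f x)) l (𝓝 0) := by
  have hslope : Tendsto (fun x => ((f x).re)⁻¹ * (f x).im) l (𝓝 0) :=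
    (tendsto_inv_atTop_zero.comp hre).zero_mul_isBoundedUnder_le him
  have hnormalized : Tendsto (fun x => 1 + (((f x).re⁻¹ * (f x).im : ℝ) : ℂ) * I) l (𝓝 1) := by
    simpa using (((continuous_ofReal.tendsto 0).comp hslope).mul_const I).const_add 1
  have harg := (continuousAt_arg one_mem_slitPlane).tendsto.comp hnormalized
  rw [arg_one] at harg
  refine harg.congr' ((hre.eventually_gt_atTop 0).mono fun x hx => ?_)
  dsimp only [Function.comp_apply]
  rw [← arg_real_mul (f x) (inv_pos.2 hx)]
  congr 1
  apply Complex.ext <;> simp [hx.ne']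

lemma re_one_sub_pos_of_mem_closedBall {w : ℂ} (hw : w ∈ closedBall (0 : ℂ) 1) (hw1 : w ≠ 1) :
    0 < (1 - w).re := by
  rw [sub_re, one_re, sub_pos]
  refine lt_of_le_of_ne ((re_le_norm w).trans (mem_closedBall_zero_iff.1 hw)) fun hre => hw1 ?_
  have hw_nonneg : 0 ≤ w :=
    re_eq_norm.1 (le_antisymm (re_le_norm w) (hre ▸ mem_closedBall_zero_iff.1 hw))
  exact Complex.ext hre (nonneg_iff.1 hw_nonneg).2.symm

lemma re_one_sub_log_one_sub (w : ℂ) : (1 - log (1 - w)).re = 1 - Real.log ‖1 - w‖ := by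
  simp [log_re]

lemma one_sub_log_two_le_re_one_sub_log_one_sub {w : ℂ} (hw : w ∈ closedBall (0 : ℂ) 1) :
    1 - Real.log 2 ≤ (1 - log (1 - w)).re := by
  have hnorm : ‖1 - w‖ ≤ 2 := by
    have := mem_closedBall_zero_iff.1 hw
    linarith [norm_sub_le (1 : ℂ) w, norm_one (α := ℂ)]
  rw [re_one_sub_log_one_sub, sub_le_sub_iff_left]
  rcases (norm_nonneg (1 - w)).eq_or_lt with h | h
  · rw [← h, Real.log_zero]
    exact Real.log_nonneg one_le_two
  · exact Real.log_le_log h hnorm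

lemma one_sub_log_two_pos : 0 < 1 - Real.log 2 := by
  linarith [Real.log_two_lt_d9]

lemma one_sub_log_one_sub_mem_slitPlane {w : ℂ} (hw : w ∈ closedBall (0 : ℂ) 1) :
    1 - log (1 - w) ∈ slitPlane :=
  mem_slitPlane_iff.2 <| Or.inl <|
    one_sub_log_two_pos.trans_le (one_sub_log_two_le_re_one_sub_log_one_sub hw)

lemma tendsto_re_one_sub_log_one_sub :
    Tendsto (fun w => (1 - log (1 - w)).re) (𝓝[≠] 1) atTop := by
  have hlog : Tendsto (fun w : ℂ => Real.log ‖1 - w‖) (𝓝[≠] 1) atBot := by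
    simpa only [Function.comp_def, norm_sub_rev] using
      Real.tendsto_log_nhdsGT_zero.comp (tendsto_norm_sub_self_nhdsNE (1 : ℂ))
  refine (tendsto_atTop_add_const_left _ 1 (tendsto_neg_atBot_atTop.comp hlog)).congr fun w => ?_
  rw [re_one_sub_log_one_sub, Function.comp_apply, ← sub_eq_add_neg]

def lusinKernel (w : ℂ) : ℂ := I * log (1 - log (1 - w))

lemma lusinKernel_re (w : ℂ) : (lusinKernel w).re = -arg (1 - log (1 - w)) := by
  simp [lusinKernel, log_im]

lemma lusinKernel_im (w : ℂ) : (lusinKernel w).im = Real.log ‖1 - log (1 - w)‖ := by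
  simp [lusinKernel, log_re]

lemma differentiableAt_lusinKernel {w : ℂ} (hw : w ∈ closedBall (0 : ℂ) 1) (hw1 : w ≠ 1) :
    DifferentiableAt ℂ lusinKernel w := by
  have h1 : 1 - w ∈ slitPlane :=
    mem_slitPlane_iff.2 (Or.inl (re_one_sub_pos_of_mem_closedBall hw hw1))
  exact (((differentiableAt_const 1).sub ((differentiableAt_const 1).sub differentiableAt_id
    |>.clog h1)).clog (one_sub_log_one_sub_mem_slitPlane hw)).const_mul I

lemma differentiableOn_lusinKernel : DifferentiableOn ℂ lusinKernel (ball 0 1) := fun w hw =>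
  (differentiableAt_lusinKernel (ball_subset_closedBall hw) (by rintro rfl; simp at hw))
    |>.differentiableWithinAt

lemma log_one_sub_log_two_le_lusinKernel_im {w : ℂ} (hw : w ∈ closedBall (0 : ℂ) 1) :
    Real.log (1 - Real.log 2) ≤ (lusinKernel w).im := by
  rw [lusinKernel_im]
  exact Real.log_le_log one_sub_log_two_pos
    ((one_sub_log_two_le_re_one_sub_log_one_sub hw).trans (re_le_norm _))

lemma tendsto_lusinKernel_im : Tendsto (fun w => (lusinKernel w).im) (𝓝[≠] 1) atTop := by
  simp_rw [lusinKernel_im]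
  exact Real.tendsto_log_atTop.comp
    (tendsto_atTop_mono (fun w => re_le_norm _) tendsto_re_one_sub_log_one_sub)

lemma continuousAt_lusinKernel_re_one : ContinuousAt (fun w => (lusinKernel w).re) 1 := by
  have hbounded : IsBoundedUnder (· ≤ ·) (𝓝[≠] 1) fun w : ℂ => ‖(1 - log (1 - w)).im‖ :=
    isBoundedUnder_of ⟨Real.pi, fun w => by simpa [log_im] using abs_arg_le_pi (1 - w)⟩
  rw [← continuousWithinAt_compl_self, ContinuousWithinAt]
  simpa [lusinKernel_re] using
    (tendsto_arg_of_tendsto_re_atTop tendsto_re_one_sub_log_one_sub hbounded).neg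

lemma continuousOn_lusinKernel_re :
    ContinuousOn (fun w => (lusinKernel w).re) (closedBall 0 1) := by
  intro w hw
  rcases eq_or_ne w 1 with rfl | hw1
  · exact continuousAt_lusinKernel_re_one.continuousWithinAt
  · exact (continuous_re.continuousAt.comp
      (differentiableAt_lusinKernel hw hw1).continuousAt).continuousWithinAt

/-- Lusin's example: there is a harmonic function `u` on the unit disk extending continuously
to the closed disk whose conjugate harmonic function `v` is unbounded in every neighborhood
of every point of the unit circle. -/
theorem exists_continuous_u_with_wild_conjugate :
    ∃ u v : ℂ → ℝ, IsHarmonicOn u unitDisk ∧ IsConjugatePair u v unitDisk ∧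
      (∃ U : ℂ → ℝ, ContinuousOn U (Metric.closedBall 0 1) ∧
        Set.EqOn U u (Metric.ball 0 1)) ∧
      ∀ ζ ∈ Metric.sphere (0 : ℂ) 1, ∀ ε : ℝ, 0 < ε →
        ¬ ∃ C : ℝ, ∀ z ∈ Metric.ball ζ ε ∩ unitDisk, |v z| ≤ C := by
  set a : ℕ → ℝ := fun k => (1 / 2) ^ k
  set ω := TopologicalSpace.denseSeq (sphere (0 : ℂ) 1)
  set f := rotationSeries lusinKernel a ω
  have hf : DifferentiableOn ℂ f (ball 0 1) :=
    differentiableOn_rotationSeries differentiableOn_lusinKernel summable_geometric_two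
  have hlim : Tendsto (fun ξ => (lusinKernel ξ).im) (𝓝[ball 0 1] 1) atTop :=
    tendsto_lusinKernel_im.mono_left <| nhdsWithin_mono _ fun ξ hξ => by rintro rfl; simp at hξ
  refine ⟨fun z => (f z).re, fun z => (f z).im, isHarmonicOn_re_of_differentiableOn isOpen_ball hf,
    by simpa only [IsConjugatePair, unitDisk, re_add_im] using hf,
    ⟨rotationSeries (fun ξ => (lusinKernel ξ).re) a ω,
      continuousOn_rotationSeries continuousOn_lusinKernel_re summable_geometric_two,
      fun z hz => (re_rotationSeries (summable_rotationSeries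
        differentiableOn_lusinKernel.continuousOn summable_geometric_two hz)).symm⟩, ?_⟩
  rintro ζ hζ ε hε ⟨C, hC⟩
  obtain ⟨z, hz, hCz⟩ := exists_lt_im_rotationSeries differentiableOn_lusinKernel.continuousOn
    (fun ξ hξ => log_one_sub_log_two_le_lusinKernel_im (ball_subset_closedBall hξ)) hlim
    (fun k => by positivity) summable_geometric_two (TopologicalSpace.denseRange_denseSeq _) hζ hε C
  linarith [hC z hz, le_abs_self (f z).im]
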